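/- arXiv:1705.05989 — 5 statements merged into one kernel-verified Lean document; each statement's English description precedes it below -/
import Mathlib

section
/- With Stokes data as above, for the right mutation: setting (R_{i+1} f)_c := R_{i+1}∘f_c if τ(c)=i and f_c otherwise, and (R_{i+1} f*)_c := f*_c∘R*_{i+1} if τ(c)=i and f*_c otherwise, the map R_{i+1} f : ⊕_c V_c → V is again an isomorphism of vector spaces, and (R_{i+1}f*)_c ∘ (R_{i+1}f)_c = id_{V_c} for all c. -/
/-! Mutating `f` at the indices `c` with `τ c = i` precomposes the sum map `⊕ V_c → V` with
the shear `x ↦ x - single b (f*_b (∑_{τ c = i} f_c x_c))`, `b = τ⁻¹(i+1)`, which is unipotent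
since `b` is not among those indices. For the second claim, `f*_b` kills the image of
`id - f_b f*_b`, so `R*_{i+1}` acts as the identity there, and `f*_c f_b = 0` because
`τ c = i < τ b`. -/

open LinearMap

theorem LinearMap.bijective_sub_comp_of_comp_eq_zero {R X Y M : Type*} [Ring R]
    [AddCommGroup X] [Module R X] [AddCommGroup Y] [Module R Y] [AddCommGroup M] [Module R M]
    {F Q : X →ₗ[R] M} {s : Y →ₗ[R] X} (g : M →ₗ[R] Y) (hF : Function.Bijective F)
    (hQ : Q ∘ₗ s = 0) : Function.Bijective (F - F ∘ₗ s ∘ₗ g ∘ₗ Q) := by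
  set E : Module.End R X := s ∘ₗ g ∘ₗ Q
  have hE : E ^ 2 = 0 := by
    rw [pow_two, show E * E = s ∘ₗ g ∘ₗ (Q ∘ₗ s) ∘ₗ g ∘ₗ Q from rfl, hQ, zero_comp, comp_zero,
      comp_zero]
  rw [show F - F ∘ₗ s ∘ₗ g ∘ₗ Q = F ∘ₗ (1 - E) by rw [comp_sub]; rfl, coe_comp]
  exact hF.comp ((Module.End.isUnit_iff _).mp (IsNilpotent.isUnit_one_sub ⟨2, hE⟩))

theorem bijective_sum_mutate {R ι M : Type*} [Ring R] [Fintype ι] [DecidableEq ι]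
    [AddCommGroup M] [Module R M] {N : ι → Type*} [∀ i, AddCommGroup (N i)]
    [∀ i, Module R (N i)] (f : ∀ i, N i →ₗ[R] M) (p : ι → Prop) [DecidablePred p]
    (b : ι) (hb : ¬ p b) (g : M →ₗ[R] N b)
    (hf : Function.Bijective fun x : ∀ i, N i => ∑ i, f i (x i)) :
    Function.Bijective fun x : ∀ i, N i =>
      ∑ i, (if p i then (LinearMap.id - f b ∘ₗ g) ∘ₗ f i else f i) (x i) := by
  set F : (∀ i, N i) →ₗ[R] M := ∑ i, f i ∘ₗ proj i
  set Q : (∀ i, N i) →ₗ[R] M := ∑ i ∈ Finset.univ.filter p, f i ∘ₗ proj i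
  have hF : ⇑F = fun x : ∀ i, N i => ∑ i, f i (x i) := by
    funext x
    simp [F]
  have hFs : F ∘ₗ single R N b = f b := by
    ext v
    simp [F, apply_single]
  have hQs : Q ∘ₗ single R N b = 0 := by
    ext v
    simp only [Q, comp_apply, LinearMap.sum_apply, LinearMap.zero_apply]
    refine Finset.sum_eq_zero fun i hi => ?_
    have hib : i ≠ b := fun h => hb (h ▸ (Finset.mem_filter.mp hi).2)
    simp [hib]
  have hmut : (fun x : ∀ i, N i =>
        ∑ i, (if p i then (LinearMap.id - f b ∘ₗ g) ∘ₗ f i else f i) (x i))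
      = ⇑(F - F ∘ₗ single R N b ∘ₗ g ∘ₗ Q) := by
    rw [← comp_assoc, hFs]
    funext x
    calc ∑ i, (if p i then (LinearMap.id - f b ∘ₗ g) ∘ₗ f i else f i) (x i)
        = ∑ i, (f i (x i) - if p i then f b (g (f i (x i))) else 0) :=
          Finset.sum_congr rfl fun i _ => by split_ifs <;> simp
      _ = F x - f b (g (Q x)) := by
          rw [Finset.sum_sub_distrib, ← Finset.sum_filter, ← map_sum, ← map_sum]
          simp [F, Q]
  rw [hmut]
  exact bijective_sub_comp_of_comp_eq_zero g (hF ▸ hf) hQs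

theorem LinearMap.comp_id_sub_comp_eq_zero {R M N : Type*} [Ring R] [AddCommGroup M] [Module R M]
    [AddCommGroup N] [Module R N] {u : N →ₗ[R] M} {v : M →ₗ[R] N} (h : v ∘ₗ u = id) :
    v ∘ₗ (id - u ∘ₗ v) = 0 := by
  rw [comp_sub, comp_id, ← comp_assoc, h, id_comp, sub_self]

theorem LinearMap.comp_id_sub_comp_comp_id_sub_comp_eq_id {R M A B : Type*} [Ring R]
    [AddCommGroup M] [Module R M] [AddCommGroup A] [Module R A] [AddCommGroup B] [Module R B]
    {fa : A →ₗ[R] M} {fastar : M →ₗ[R] A} {fb : B →ₗ[R] M} {fbstar : M →ₗ[R] B}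
    (X : B →ₗ[R] M) (ha : fastar ∘ₗ fa = id) (hab : fastar ∘ₗ fb = 0) (hb : fbstar ∘ₗ fb = id) :
    (fastar ∘ₗ (id - X ∘ₗ fbstar)) ∘ₗ ((id - fb ∘ₗ fbstar) ∘ₗ fa) = id := by
  have hproj : fastar ∘ₗ (id - fb ∘ₗ fbstar) = fastar := by
    rw [comp_sub, comp_id, ← comp_assoc, hab, zero_comp, sub_zero]
  calc (fastar ∘ₗ (id - X ∘ₗ fbstar)) ∘ₗ ((id - fb ∘ₗ fbstar) ∘ₗ fa)
      = (fastar ∘ₗ (id - fb ∘ₗ fbstar) - (fastar ∘ₗ X) ∘ₗ fbstar ∘ₗ (id - fb ∘ₗ fbstar)) ∘ₗ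
          fa := by
        simp only [comp_sub, sub_comp, comp_id, id_comp, comp_assoc]
        abel
    _ = id := by rw [hproj, comp_id_sub_comp_eq_zero hb, comp_zero, sub_zero, ha]

theorem stmt6_general (k : Type*) [Field k] (C : Type*) [Fintype C] (m : ℕ) (τ : C ≃ Fin m)
    (V : Type*) [AddCommGroup V] [Module k V]
    (Vc : C → Type*) [∀ c, AddCommGroup (Vc c)] [∀ c, Module k (Vc c)]
    (T : V ≃ₗ[k] V) (Tc : ∀ c, Vc c ≃ₗ[k] Vc c)
    (f : ∀ c, Vc c →ₗ[k] V) (fstar : ∀ c, V →ₗ[k] Vc c)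
    (hf : Function.Bijective (fun x : ∀ c, Vc c => ∑ c, f c (x c)))
    (hstar0 : ∀ c c' : C, τ c' < τ c → (fstar c') ∘ₗ (f c) = 0)
    (hstarid : ∀ c : C, (fstar c) ∘ₗ (f c) = LinearMap.id)
    (i ip1 : Fin m) (hip : (ip1 : ℕ) = (i : ℕ) + 1) :
    (Function.Bijective (fun x : ∀ c, Vc c => ∑ c,
        (if τ c = i then
            (LinearMap.id - (f (τ.symm ip1)) ∘ₗ (fstar (τ.symm ip1))) ∘ₗ (f c)
          else f c) (x c))) ∧
      ∀ c : C,
        (if τ c = i then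
            (fstar c) ∘ₗ (LinearMap.id - T.toLinearMap ∘ₗ (f (τ.symm ip1)) ∘ₗ
              (Tc (τ.symm ip1)).symm.toLinearMap ∘ₗ (fstar (τ.symm ip1)))
          else fstar c) ∘ₗ
          (if τ c = i then
              (LinearMap.id - (f (τ.symm ip1)) ∘ₗ (fstar (τ.symm ip1))) ∘ₗ (f c)
            else f c) = LinearMap.id := by
  classical
  have hb : τ (τ.symm ip1) ≠ i := by
    rw [τ.apply_symm_apply, ne_eq, Fin.ext_iff, hip]
    omega
  refine ⟨bijective_sum_mutate f (fun c => τ c = i) _ hb _ hf, fun c => ?_⟩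
  split_ifs with hc
  · have hlt : τ c < τ (τ.symm ip1) := by
      rw [hc, τ.apply_symm_apply, Fin.lt_def, hip]
      omega
    simpa only [LinearMap.comp_assoc] using
      LinearMap.comp_id_sub_comp_comp_id_sub_comp_eq_id
        (T.toLinearMap ∘ₗ f _ ∘ₗ (Tc _).symm.toLinearMap) (hstarid c) (hstar0 _ c hlt) (hstarid _)
  · exact hstarid c

/-- Right mutation of Stokes data: with `R_{i+1} := id − f_{τ⁻¹(i+1)} f*_{τ⁻¹(i+1)}`
and `R*_{i+1} := id − T f_{τ⁻¹(i+1)} T_{τ⁻¹(i+1)}⁻¹ f*_{τ⁻¹(i+1)}`, setting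
`(R_{i+1}f)_c := R_{i+1}∘f_c` if `τ(c)=i` and `f_c` otherwise, and
`(R_{i+1}f*)_c := f*_c∘R*_{i+1}` if `τ(c)=i` and `f*_c` otherwise, the map
`R_{i+1}f : ⊕_c V_c → V` is again an isomorphism of vector spaces, and
`(R_{i+1}f*)_c ∘ (R_{i+1}f)_c = id` for all `c`. -/
theorem stmt6 (k : Type*) [Field k] (C : Type*) [Fintype C] (m : ℕ) (τ : C ≃ Fin m)
    (V : Type*) [AddCommGroup V] [Module k V] [FiniteDimensional k V]
    (Vc : C → Type*) [∀ c, AddCommGroup (Vc c)] [∀ c, Module k (Vc c)]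
    [∀ c, FiniteDimensional k (Vc c)]
    (T : V ≃ₗ[k] V) (Tc : ∀ c, Vc c ≃ₗ[k] Vc c)
    (f : ∀ c, Vc c →ₗ[k] V) (fstar : ∀ c, V →ₗ[k] Vc c)
    (hf : Function.Bijective (fun x : ∀ c, Vc c => ∑ c, f c (x c)))
    (hstar0 : ∀ c c' : C, τ c' < τ c → (fstar c') ∘ₗ (f c) = 0)
    (hstarid : ∀ c : C, (fstar c) ∘ₗ (f c) = LinearMap.id)
    (hbang0 : ∀ c c' : C, τ c < τ c' →
      ((Tc c').symm.toLinearMap ∘ₗ (fstar c') ∘ₗ T.toLinearMap) ∘ₗ (f c) = 0)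
    (hbangid : ∀ c : C,
      ((Tc c).symm.toLinearMap ∘ₗ (fstar c) ∘ₗ T.toLinearMap) ∘ₗ (f c) = LinearMap.id)
    (i ip1 : Fin m) (hip : (ip1 : ℕ) = (i : ℕ) + 1) :
    (Function.Bijective (fun x : ∀ c, Vc c => ∑ c,
        (if τ c = i then
            (LinearMap.id - (f (τ.symm ip1)) ∘ₗ (fstar (τ.symm ip1))) ∘ₗ (f c)
          else f c) (x c))) ∧
      ∀ c : C,
        (if τ c = i then
            (fstar c) ∘ₗ (LinearMap.id - T.toLinearMap ∘ₗ (f (τ.symm ip1)) ∘ₗ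
              (Tc (τ.symm ip1)).symm.toLinearMap ∘ₗ (fstar (τ.symm ip1)))
          else fstar c) ∘ₗ
          (if τ c = i then
              (LinearMap.id - (f (τ.symm ip1)) ∘ₗ (fstar (τ.symm ip1))) ∘ₗ (f c)
            else f c) = LinearMap.id :=
  stmt6_general k C m τ V Vc T Tc f fstar hf hstar0 hstarid i ip1 hip
end

section
/- In the setting of Stokes data, with R_i := id − f_{τ⁻¹(i)} f*_{τ⁻¹(i)} and R'_{i+2} := id − R_{i+2} f_{τ⁻¹(i+1)} f*_{τ⁻¹(i+1)} R*_{i+2}, one has R'_{i+2} ∘ R_{i+2} = R_{i+2} ∘ R_{i+1} ∘ R_{i+2}. -/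
/-!
Put `p := f_c f*_c` with `c = τ⁻¹(i+2)`, so that `R_{i+2} = 1 - p`. From `f*_c f_c = id` the map
`p` is idempotent, hence so is `R_{i+2}`, and `R*_{i+2}` — which has the form `1 - g f*_c` — fixes
`R_{i+2}` on the left. Expanding `R'_{i+2} R_{i+2}` then leaves only ring arithmetic.
-/

theorem IsIdempotentElem.one_sub_mul_mul_mul_self {A : Type*} [Ring A] {r u : A}
    (hr : IsIdempotentElem r) (hur : u * r = r) (c : A) :
    (1 - r * c * u) * r = r * (1 - c) * r := by
  calc (1 - r * c * u) * r = r * r - r * c * (u * r) := by rw [hr.eq]; noncomm_ring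
    _ = r * (1 - c) * r := by rw [hur]; noncomm_ring

namespace LinearMap

variable {R M N : Type*} [Ring R] [AddCommGroup M] [Module R M] [AddCommGroup N] [Module R N]

theorem comp_comp_comp_self_of_comp_eq_id {f : N →ₗ[R] M} {g : M →ₗ[R] N}
    (hgf : g ∘ₗ f = id) {P : Type*} [AddCommGroup P] [Module R P] (h : N →ₗ[R] P) :
    (h ∘ₗ g) ∘ₗ (f ∘ₗ g) = h ∘ₗ g := by
  rw [comp_assoc (f ∘ₗ g) g h, ← comp_assoc g f g, hgf, id_comp]

theorem isIdempotentElem_comp_of_comp_eq_id {f : N →ₗ[R] M} {g : M →ₗ[R] N}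
    (hgf : g ∘ₗ f = id) : IsIdempotentElem (f ∘ₗ g) :=
  comp_comp_comp_self_of_comp_eq_id hgf f

theorem id_sub_comp_comp_id_sub_comp_of_comp_eq_id {f : N →ₗ[R] M} {g : M →ₗ[R] N}
    (hgf : g ∘ₗ f = id) (h : N →ₗ[R] M) :
    (id - h ∘ₗ g) ∘ₗ (id - f ∘ₗ g) = id - f ∘ₗ g := by
  rw [comp_sub, sub_comp, sub_comp, comp_comp_comp_self_of_comp_eq_id hgf, id_comp, comp_id]
  abel

end LinearMap

theorem stmt7_general (k : Type*) [Field k] (C : Type*) (m : ℕ) (τ : C ≃ Fin m)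
    (V : Type*) [AddCommGroup V] [Module k V]
    (Vc : C → Type*) [∀ c, AddCommGroup (Vc c)] [∀ c, Module k (Vc c)]
    (T : V ≃ₗ[k] V) (Tc : ∀ c, Vc c ≃ₗ[k] Vc c)
    (f : ∀ c, Vc c →ₗ[k] V) (fstar : ∀ c, V →ₗ[k] Vc c)
    (hstarid : ∀ c : C, (fstar c) ∘ₗ (f c) = LinearMap.id)
    (i1 i2 : Fin m)
    (R : Fin m → (V →ₗ[k] V))
    (hR : ∀ j, R j = LinearMap.id - (f (τ.symm j)) ∘ₗ (fstar (τ.symm j)))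
    (Rstar : Fin m → (V →ₗ[k] V))
    (hRstar : ∀ j, Rstar j = LinearMap.id - T.toLinearMap ∘ₗ (f (τ.symm j)) ∘ₗ
      (Tc (τ.symm j)).symm.toLinearMap ∘ₗ (fstar (τ.symm j))) :
    (LinearMap.id -
        (R i2) ∘ₗ (f (τ.symm i1)) ∘ₗ (fstar (τ.symm i1)) ∘ₗ (Rstar i2)) ∘ₗ (R i2) =
      (R i2) ∘ₗ (R i1) ∘ₗ (R i2) := by
  have hidem : IsIdempotentElem (R i2) := by
    rw [hR i2]
    exact (LinearMap.isIdempotentElem_comp_of_comp_eq_id (hstarid _)).one_sub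
  have hfix : Rstar i2 * R i2 = R i2 := by
    rw [hRstar i2, hR i2]
    simp only [← LinearMap.comp_assoc]
    exact LinearMap.id_sub_comp_comp_id_sub_comp_of_comp_eq_id (hstarid _) _
  rw [hR i1]
  exact hidem.one_sub_mul_mul_mul_self hfix (f (τ.symm i1) ∘ₗ fstar (τ.symm i1))

/-- In the setting of Stokes data, with `R_j := id − f_{τ⁻¹(j)} f*_{τ⁻¹(j)}`,
`R*_j := id − T f_{τ⁻¹(j)} T_{τ⁻¹(j)}⁻¹ f*_{τ⁻¹(j)}` and
`R'_{i+2} := id − R_{i+2} f_{τ⁻¹(i+1)} f*_{τ⁻¹(i+1)} R*_{i+2}`, one has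
`R'_{i+2} ∘ R_{i+2} = R_{i+2} ∘ R_{i+1} ∘ R_{i+2}`. -/
theorem stmt7 (k : Type*) [Field k] (C : Type*) [Fintype C] (m : ℕ) (τ : C ≃ Fin m)
    (V : Type*) [AddCommGroup V] [Module k V] [FiniteDimensional k V]
    (Vc : C → Type*) [∀ c, AddCommGroup (Vc c)] [∀ c, Module k (Vc c)]
    [∀ c, FiniteDimensional k (Vc c)]
    (T : V ≃ₗ[k] V) (Tc : ∀ c, Vc c ≃ₗ[k] Vc c)
    (f : ∀ c, Vc c →ₗ[k] V) (fstar : ∀ c, V →ₗ[k] Vc c)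
    (hf : Function.Bijective (fun x : ∀ c, Vc c => ∑ c, f c (x c)))
    (hstar0 : ∀ c c' : C, τ c' < τ c → (fstar c') ∘ₗ (f c) = 0)
    (hstarid : ∀ c : C, (fstar c) ∘ₗ (f c) = LinearMap.id)
    (hbang0 : ∀ c c' : C, τ c < τ c' →
      ((Tc c').symm.toLinearMap ∘ₗ (fstar c') ∘ₗ T.toLinearMap) ∘ₗ (f c) = 0)
    (hbangid : ∀ c : C,
      ((Tc c).symm.toLinearMap ∘ₗ (fstar c) ∘ₗ T.toLinearMap) ∘ₗ (f c) = LinearMap.id)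
    (i i1 i2 : Fin m) (hi1 : (i1 : ℕ) = (i : ℕ) + 1) (hi2 : (i2 : ℕ) = (i : ℕ) + 2)
    (R : Fin m → (V →ₗ[k] V))
    (hR : ∀ j, R j = LinearMap.id - (f (τ.symm j)) ∘ₗ (fstar (τ.symm j)))
    (Rstar : Fin m → (V →ₗ[k] V))
    (hRstar : ∀ j, Rstar j = LinearMap.id - T.toLinearMap ∘ₗ (f (τ.symm j)) ∘ₗ
      (Tc (τ.symm j)).symm.toLinearMap ∘ₗ (fstar (τ.symm j))) :
    (LinearMap.id -
        (R i2) ∘ₗ (f (τ.symm i1)) ∘ₗ (fstar (τ.symm i1)) ∘ₗ (Rstar i2)) ∘ₗ (R i2) =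
      (R i2) ∘ₗ (R i1) ∘ₗ (R i2) :=
  stmt7_general k C m τ V Vc T Tc f fstar hstarid i1 i2 R hR Rstar hRstar
end

section
/- Let ((V,T), (V_c,T_c)_{c∈C}, f, f*) be Stokes data of type (C,τ) with m = |C|, c_i := τ⁻¹(i), R_j := id − f_{c_j} f*_{c_j}. Then for each i ∈ {1,…,m}: (∑_{i ≤ j ≤ m} R_m∘⋯∘R_{j+1}∘f_{c_j}∘f*_{c_j}) ∘ f_{c_i} = f_{c_i}. (Here for j = m the empty composition R_m∘⋯∘R_{m+1} is the identity.) -/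
/-!
Write `C j := R m ∘ ⋯ ∘ R (j + 1)`, so that `C (j - 1) = C j ∘ R j`. Since `f j ∘ f* j = id - R j`,
the `j`-th summand is `C j - C (j - 1)`, and the sum telescopes to `id - C (i - 1) = id - C i ∘ R i`.
Finally `R i ∘ f i = f i - f i ∘ (f* i ∘ f i) = 0`, so composing with `f i` leaves `f i`.
-/

open Finset

theorem List.foldl_mul_left_eq_reverse_prod_mul {M : Type*} [Monoid M] (l : List M) (b : M) :
    l.foldl (fun acc a => a * acc) b = l.reverse.prod * b := by
  induction l generalizing b with
  | nil => simp
  | cons a l ih => simp [ih, mul_assoc]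

section DescendingProd

variable {M : Type*} [Monoid M] (r : ℕ → M)

/-- `descendingProd r m j = r m * r (m - 1) * ⋯ * r (j + 1)`, which is `1` as soon as `m ≤ j`. -/
def descendingProd (m j : ℕ) : M :=
  ((List.range (m - j)).map fun t => r (j + 1 + t)).reverse.prod

@[simp]
theorem descendingProd_self (m : ℕ) : descendingProd r m m = 1 := by
  simp [descendingProd]

theorem descendingProd_eq_mul {m j : ℕ} (h : j < m) :
    descendingProd r m j = descendingProd r m (j + 1) * r (j + 1) := by
  obtain ⟨n, hn⟩ : ∃ n, m - j = n + 1 := ⟨m - (j + 1), by omega⟩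
  have hm : m - (j + 1) = n := by omega
  simp only [descendingProd, hn, hm, List.range_succ_eq_map, List.map_cons, List.map_map,
    List.reverse_cons, List.prod_append, List.prod_singleton, add_zero]
  congr 4
  funext t
  simp only [Function.comp_apply]
  congr 1
  omega

end DescendingProd

theorem sum_Icc_descendingProd_mul_one_sub {A : Type*} [Ring A] (r : ℕ → A) {i m : ℕ}
    (hi : 1 ≤ i) (him : i ≤ m) :
    ∑ j ∈ Icc i m, descendingProd r m j * (1 - r j) = 1 - descendingProd r m (i - 1) := by
  have hterm : ∀ j ∈ Icc i m, descendingProd r m j * (1 - r j)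
      = descendingProd r m (j + 1 - 1) - descendingProd r m (j - 1) := by
    intro j hj
    rw [mem_Icc] at hj
    cases j with
    | zero => omega
    | succ j => simp [descendingProd_eq_mul r (show j < m by omega), mul_sub]
  rw [sum_congr rfl hterm, sum_Icc_sub him (fun j => descendingProd r m (j - 1)),
    Nat.add_sub_cancel, descendingProd_self]

theorem LinearMap.foldl_comp_range_map_eq_descendingProd {k V : Type*} [Semiring k]
    [AddCommMonoid V] [Module k V] (r : ℕ → Module.End k V) (m j : ℕ) :
    ((List.range (m - j)).map fun t => r (j + 1 + t)).foldl (fun acc a => a ∘ₗ acc) LinearMap.id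
      = descendingProd r m j :=
  (List.foldl_mul_left_eq_reverse_prod_mul _ 1).trans (mul_one _)

theorem stmt9_general (k : Type*) [Field k] (m : ℕ)
    (V : Type*) [AddCommGroup V] [Module k V]
    (Vc : ℕ → Type*) [∀ j, AddCommGroup (Vc j)] [∀ j, Module k (Vc j)]
    (f : ∀ j, Vc j →ₗ[k] V) (fstar : ∀ j, V →ₗ[k] Vc j)
    (hstarid : ∀ i : ℕ, 1 ≤ i → i ≤ m → (fstar i) ∘ₗ (f i) = LinearMap.id)
    (R : ℕ → (V →ₗ[k] V))
    (hR : ∀ j, R j = LinearMap.id - (f j) ∘ₗ (fstar j))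
    (compR : ℕ → (V →ₗ[k] V))
    (hcompR : ∀ j, compR j =
      ((List.range (m - j)).map (fun t => R (j + 1 + t))).foldl
        (fun acc a => a ∘ₗ acc) LinearMap.id) :
    ∀ i : ℕ, 1 ≤ i → i ≤ m →
      (∑ j ∈ Finset.Icc i m, (compR j) ∘ₗ (f j) ∘ₗ (fstar j)) ∘ₗ (f i) = f i := by
  intro i hi him
  have hffstar : ∀ j, f j ∘ₗ fstar j = 1 - R j := fun j => by
    rw [hR, Module.End.one_eq_id, sub_sub_cancel]
  have hRf : R i ∘ₗ f i = 0 := by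
    rw [hR, LinearMap.sub_comp, LinearMap.comp_assoc, hstarid i hi him, LinearMap.id_comp,
      LinearMap.comp_id, sub_self]
  have hsum : ∑ j ∈ Icc i m, compR j ∘ₗ f j ∘ₗ fstar j = 1 - descendingProd R m (i - 1) := by
    simp only [hcompR, LinearMap.foldl_comp_range_map_eq_descendingProd, hffstar]
    exact sum_Icc_descendingProd_mul_one_sub R hi him
  rw [hsum, descendingProd_eq_mul R (show i - 1 < m by omega), Nat.sub_add_cancel hi,
    LinearMap.sub_comp, Module.End.mul_eq_comp, LinearMap.comp_assoc, hRf, LinearMap.comp_zero,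
    sub_zero, Module.End.one_eq_id, LinearMap.id_comp]

/-- Telescoping identity for Stokes data: with `c_i := τ⁻¹(i)` (here data is indexed
directly by `i ∈ {1,…,m}`), `R_j := id − f_{c_j} f*_{c_j}`, for each `i ∈ {1,…,m}`:
`(∑_{i ≤ j ≤ m} R_m∘⋯∘R_{j+1}∘f_{c_j}∘f*_{c_j}) ∘ f_{c_i} = f_{c_i}`,
where for `j = m` the empty composition is the identity. -/
theorem stmt9 (k : Type*) [Field k] (m : ℕ)
    (V : Type*) [AddCommGroup V] [Module k V] [FiniteDimensional k V]
    (Vc : ℕ → Type*) [∀ j, AddCommGroup (Vc j)] [∀ j, Module k (Vc j)]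
    [∀ j, FiniteDimensional k (Vc j)]
    (f : ∀ j, Vc j →ₗ[k] V) (fstar : ∀ j, V →ₗ[k] Vc j)
    (hstar0 : ∀ i j : ℕ, 1 ≤ j → j < i → i ≤ m → (fstar j) ∘ₗ (f i) = 0)
    (hstarid : ∀ i : ℕ, 1 ≤ i → i ≤ m → (fstar i) ∘ₗ (f i) = LinearMap.id)
    (R : ℕ → (V →ₗ[k] V))
    (hR : ∀ j, R j = LinearMap.id - (f j) ∘ₗ (fstar j))
    (compR : ℕ → (V →ₗ[k] V))
    (hcompR : ∀ j, compR j =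
      ((List.range (m - j)).map (fun t => R (j + 1 + t))).foldl
        (fun acc a => a ∘ₗ acc) LinearMap.id) :
    ∀ i : ℕ, 1 ≤ i → i ≤ m →
      (∑ j ∈ Finset.Icc i m, (compR j) ∘ₗ (f j) ∘ₗ (fstar j)) ∘ₗ (f i) = f i :=
  stmt9_general k m V Vc f fstar hstarid R hR compR hcompR
end

section
/- Let ((V,T),(V_c,T_c)_{c∈C},f,f*) be Stokes data compatible with a non-degenerate pairing [·,·⟩ on V (each f_c isometric onto its image with non-degenerate induced pairing, and f*_c left-adjoint to f_c). Then for the mutation operators R_i := id − f_{τ⁻¹(i)} f*_{τ⁻¹(i)} and R*_i := id − T f_{τ⁻¹(i)} T⁻¹_{τ⁻¹(i)} f*_{τ⁻¹(i)}, one has [v, R_i w⟩ = [R*_i v, w⟩ for all v,w ∈ V. -/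
/- Both correction terms pair to `[f*_c v, f*_c w⟩_c`: on the left by adjointness, on the right
by moving `T` across with `[v,w⟩ = [Tw,v⟩`, then adjointness, then moving `T_c⁻¹` across with
`[x,y⟩_c = [T_c y,x⟩_c`. -/

section Monodromy

variable {R V W : Type*} [CommSemiring R] [AddCommMonoid V] [Module R V]
  [AddCommMonoid W] [Module R W]
  {B : V →ₗ[R] V →ₗ[R] R} {Bc : W →ₗ[R] W →ₗ[R] R} {T : V ≃ₗ[R] V} {Tc : W ≃ₗ[R] W}
  {f : W →ₗ[R] V} {fstar : V →ₗ[R] W}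

theorem pairing_monodromy_apply_symm (hT : ∀ v w : V, B v w = B (T w) v)
    (hTc : ∀ v w : W, Bc v w = Bc (Tc w) v) (hadj : ∀ (v : V) (w : W), B v (f w) = Bc (fstar v) w)
    (x : W) (w : V) : B (T (f (Tc.symm x))) w = Bc x (fstar w) := by
  rw [← hT, hadj, hTc, LinearEquiv.apply_symm_apply]

end Monodromy

theorem stmt12_general (k : Type*) [Field k] (C : Type*) (m : ℕ) (τ : C ≃ Fin m)
    (V : Type*) [AddCommGroup V] [Module k V]
    (Vc : C → Type*) [∀ c, AddCommGroup (Vc c)] [∀ c, Module k (Vc c)]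
    (B : V →ₗ[k] V →ₗ[k] k)
    (T : V ≃ₗ[k] V) (hT : ∀ v w : V, B v w = B (T w) v)
    (Bc : ∀ c, Vc c →ₗ[k] Vc c →ₗ[k] k)
    (Tc : ∀ c, Vc c ≃ₗ[k] Vc c)
    (hTc : ∀ c, ∀ v w : Vc c, Bc c v w = Bc c (Tc c w) v)
    (f : ∀ c, Vc c →ₗ[k] V) (fstar : ∀ c, V →ₗ[k] Vc c)
    (hadj : ∀ c, ∀ (v : V) (w : Vc c), B v (f c w) = Bc c (fstar c v) w)
    (i : Fin m) :
    ∀ v w : V,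
      B v (((LinearMap.id - (f (τ.symm i)) ∘ₗ (fstar (τ.symm i))) : V →ₗ[k] V) w) =
        B (((LinearMap.id - T.toLinearMap ∘ₗ (f (τ.symm i)) ∘ₗ
            (Tc (τ.symm i)).symm.toLinearMap ∘ₗ (fstar (τ.symm i))) : V →ₗ[k] V) v) w := by
  intro v w
  set c := τ.symm i
  have hcorr := pairing_monodromy_apply_symm hT (hTc c) (hadj c) (fstar c v) w
  simp only [LinearMap.sub_apply, LinearMap.comp_apply, LinearMap.id_apply, map_sub,
    LinearEquiv.coe_coe, hcorr, hadj]

/-- For Stokes data compatible with a non-degenerate pairing `[·,·⟩` on `V`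
(each `f_c` isometric with non-degenerate induced pairings `[·,·⟩_c`, monodromy
compatibilities `[v,w⟩ = [Tw,v⟩` and `[v,w⟩_c = [T_c w, v⟩_c`, and `f*_c`
left-adjoint to `f_c`), the mutation operators
`R_i := id − f_{τ⁻¹(i)} f*_{τ⁻¹(i)}` and
`R*_i := id − T f_{τ⁻¹(i)} T_{τ⁻¹(i)}⁻¹ f*_{τ⁻¹(i)}` satisfy
`[v, R_i w⟩ = [R*_i v, w⟩` for all `v, w ∈ V`. -/
theorem stmt12 (k : Type*) [Field k] (C : Type*) [Fintype C] (m : ℕ) (τ : C ≃ Fin m)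
    (V : Type*) [AddCommGroup V] [Module k V] [FiniteDimensional k V]
    (Vc : C → Type*) [∀ c, AddCommGroup (Vc c)] [∀ c, Module k (Vc c)]
    [∀ c, FiniteDimensional k (Vc c)]
    (B : V →ₗ[k] V →ₗ[k] k) (hB : Function.Bijective fun v : V => B v)
    (T : V ≃ₗ[k] V) (hT : ∀ v w : V, B v w = B (T w) v)
    (Bc : ∀ c, Vc c →ₗ[k] Vc c →ₗ[k] k)
    (hBc : ∀ c, Function.Bijective fun v : Vc c => Bc c v)
    (Tc : ∀ c, Vc c ≃ₗ[k] Vc c)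
    (hTc : ∀ c, ∀ v w : Vc c, Bc c v w = Bc c (Tc c w) v)
    (f : ∀ c, Vc c →ₗ[k] V) (fstar : ∀ c, V →ₗ[k] Vc c)
    (hf : Function.Bijective (fun x : ∀ c, Vc c => ∑ c, f c (x c)))
    (hiso : ∀ c, ∀ v w : Vc c, B (f c v) (f c w) = Bc c v w)
    (hadj : ∀ c, ∀ (v : V) (w : Vc c), B v (f c w) = Bc c (fstar c v) w)
    (i : Fin m) :
    ∀ v w : V,
      B v (((LinearMap.id - (f (τ.symm i)) ∘ₗ (fstar (τ.symm i))) : V →ₗ[k] V) w) =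
        B (((LinearMap.id - T.toLinearMap ∘ₗ (f (τ.symm i)) ∘ₗ
            (Tc (τ.symm i)).symm.toLinearMap ∘ₗ (fstar (τ.symm i))) : V →ₗ[k] V) v) w :=
  stmt12_general k C m τ V Vc B T hT Bc Tc hTc f fstar hadj i
end

section
/- Let X be an n-dimensional compact complex manifold and suppose H^odd(X) ∩ E ≠ 0, where E is a generalized eigenspace of the (graded-commutative, Frobenius) quantum multiplication c₁(X)*₀ with eigenvalue λ, with respect to a non-degenerate Poincaré pairing. Then dim(H^ev(X) ∩ E) ≥ 2. Consequently, if the even part of quantum cohomology satisfies Property O (the extremal eigenvalue T has a one-dimensional eigenspace in H^ev), then the full cohomology also satisfies Property O. -/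
/-! Let `g = c *₀ - λ`. As `c` is even and central, `g` preserves the grading and is self-adjoint
for the Frobenius pairing, so `E = ker gᴺ` splits into its even and odd parts and is orthogonal
to the Fitting complement `range gᴺ`. For a nonzero odd `α ∈ E` pick an odd `β` with
`(α, β) ≠ 0`; then `γ = α *₀ β` is an even element of `E`, nonzero because `(1, γ) = (α, β)`, and
isotropic because `β *₀ γ = -α *₀ β *₀ β = 0`. If `γ` spanned `H^ev ∩ E` it would be orthogonal to
all of `E`, hence to all of `H`, contradicting nondegeneracy. -/

open Module Module.End LinearMap

theorem LinearMap.IsAdjointPair.pow {R M M₂ : Type*} [CommSemiring R] [AddCommMonoid M]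
    [Module R M] [AddCommMonoid M₂] [Module R M₂] {B : M →ₗ[R] M →ₗ[R] M₂} {f : End R M}
    (hf : IsAdjointPair B B f f) (n : ℕ) : IsAdjointPair B B ⇑(f ^ n) ⇑(f ^ n) := by
  induction n with
  | zero => exact isAdjointPair_one
  | succ n ih =>
    have h := ih.mul hf
    rwa [← pow_succ, ← pow_succ'] at h

section Fitting

variable {R M M₂ : Type*} [CommRing R] [AddCommGroup M] [Module R M] [AddCommGroup M₂]
  [Module R M₂] {B : M →ₗ[R] M →ₗ[R] M₂} {f : End R M} {μ : R}

theorem LinearMap.IsAdjointPair.apply_eq_zero_of_mem_maxGenEigenspace_of_mem_iInf_range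
    (hf : IsAdjointPair B B f f) {x y : M} (hx : x ∈ f.maxGenEigenspace μ)
    (hy : y ∈ ⨅ n, range ((f - μ • 1) ^ n)) : B x y = 0 := by
  obtain ⟨k, hk⟩ := (mem_maxGenEigenspace f μ x).1 hx
  obtain ⟨z, rfl⟩ := Submodule.mem_iInf _ |>.1 hy k
  have hsub : IsAdjointPair B B ⇑(f - μ • 1) ⇑(f - μ • 1) := hf.sub (isAdjointPair_one.smul μ)
  rw [← hsub.pow k, hk, map_zero, zero_apply]

theorem LinearMap.IsAdjointPair.eq_zero_of_mem_maxGenEigenspace_of_orthogonal [IsArtinian R M]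
    [IsNoetherian R M] (hB : Function.Injective B) (hf : IsAdjointPair B B f f) {x : M}
    (hx : x ∈ f.maxGenEigenspace μ) (horth : ∀ e ∈ f.maxGenEigenspace μ, B x e = 0) :
    x = 0 := by
  have hfitting := (isCompl_iSup_ker_pow_iInf_range_pow (f - μ • 1)).sup_eq_top
  simp_rw [← genEigenspace_nat, iSup_genEigenspace_eq] at hfitting
  refine hB (LinearMap.ext fun y ↦ ?_)
  obtain ⟨e, he, r, hr, rfl⟩ := Submodule.mem_sup.1 (hfitting ▸ Submodule.mem_top : y ∈ _)
  rw [map_add, horth e he, hf.apply_eq_zero_of_mem_maxGenEigenspace_of_mem_iInf_range hx hr,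
    map_zero, zero_apply, add_zero]

end Fitting

section Graded

variable {R M : Type*} [CommRing R] [AddCommGroup M] [Module R M] {p q : Submodule R M}
  {f : End R M}

theorem Module.End.projection_mem_maxGenEigenspace (hpq : IsCompl p q)
    (hp : p ∈ f.invtSubmodule) (hq : q ∈ f.invtSubmodule) {μ : R} {x : M}
    (hx : x ∈ f.maxGenEigenspace μ) : p.projection q hpq x ∈ f.maxGenEigenspace μ := by
  have hcomm : Commute (p.projection q hpq) f :=
    (LinearMap.IsIdempotentElem.commute_iff (Submodule.isIdempotentElem_projection hpq)).2
      ⟨by rwa [Submodule.range_projection], by rwa [Submodule.ker_projection]⟩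
  exact mapsTo_maxGenEigenspace_of_comm hcomm.symm μ hx

theorem Module.End.maxGenEigenspace_eq_inf_sup_inf (hpq : IsCompl p q)
    (hp : p ∈ f.invtSubmodule) (hq : q ∈ f.invtSubmodule) (μ : R) :
    f.maxGenEigenspace μ = p ⊓ f.maxGenEigenspace μ ⊔ q ⊓ f.maxGenEigenspace μ := by
  refine le_antisymm (fun x hx ↦ ?_) (sup_le inf_le_right inf_le_right)
  rw [← Submodule.projection_add_projection_eq_self hpq x]
  exact Submodule.add_mem_sup
    ⟨Submodule.projection_apply_mem _ _, projection_mem_maxGenEigenspace hpq hp hq hx⟩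
    ⟨Submodule.projection_apply_mem _ _, projection_mem_maxGenEigenspace hpq.symm hq hp hx⟩

end Graded

theorem LinearMap.IsAdjointPair.two_le_finrank_inf_maxGenEigenspace {K V W : Type*} [Field K]
    [AddCommGroup V] [Module K V] [FiniteDimensional K V] [AddCommGroup W] [Module K W]
    {B : V →ₗ[K] V →ₗ[K] W} (hB : Function.Injective B) {f : End K V}
    (hf : IsAdjointPair B B f f) {p q : Submodule K V} (hpq : IsCompl p q)
    (hp : p ∈ f.invtSubmodule) (hq : q ∈ f.invtSubmodule) {μ : K} {γ : V}
    (hγ : γ ∈ p ⊓ f.maxGenEigenspace μ) (hγ0 : γ ≠ 0) (hγγ : B γ γ = 0)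
    (hγq : ∀ y ∈ q, B γ y = 0) : 2 ≤ finrank K ↥(p ⊓ f.maxGenEigenspace μ) := by
  by_contra! hlt
  have hspan : p ⊓ f.maxGenEigenspace μ = K ∙ γ :=
    (Submodule.eq_of_le_of_finrank_le ((Submodule.span_singleton_le_iff_mem _ _).2 hγ)
      (by rw [finrank_span_singleton hγ0]; omega)).symm
  refine hγ0 (hf.eq_zero_of_mem_maxGenEigenspace_of_orthogonal hB hγ.2 fun e he ↦ ?_)
  rw [maxGenEigenspace_eq_inf_sup_inf hpq hp hq, hspan] at he
  obtain ⟨a, ha, b, hb, rfl⟩ := Submodule.mem_sup.1 he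
  obtain ⟨t, rfl⟩ := Submodule.mem_span_singleton.1 ha
  rw [map_add, map_smul, hγγ, smul_zero, hγq b hb.1, add_zero]

section Frobenius

variable {R M M₂ : Type*} [CommRing R] [AddCommGroup M] [Module R M] [AddCommGroup M₂]
  [Module R M₂] {B : M →ₗ[R] M →ₗ[R] M₂}

theorem exists_mem_apply_ne_zero_of_isCompl (hB : Function.Injective B)
    {p q : Submodule R M} (hpq : IsCompl p q) {x : M} (hx : x ≠ 0)
    (hxp : ∀ y ∈ p, B x y = 0) : ∃ y ∈ q, B x y ≠ 0 := by
  by_contra! hxq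
  refine hx (hB (LinearMap.ext fun y ↦ ?_))
  obtain ⟨a, ha, b, hb, rfl⟩ := Submodule.mem_sup.1 (hpq.sup_eq_top ▸ Submodule.mem_top : y ∈ p ⊔ q)
  rw [map_add, hxp a ha, hxq b hb, add_zero, map_zero, LinearMap.zero_apply]

variable {mul : M →ₗ[R] M →ₗ[R] M}

theorem isAdjointPair_mul_of_forall_mul_comm (hFrob : ∀ x y z, B (mul x y) z = B x (mul y z))
    {c : M} (hc : ∀ y, mul c y = mul y c) : IsAdjointPair B B (mul c) (mul c) :=
  fun x y ↦ by rw [hc, hFrob]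

theorem mul_mem_maxGenEigenspace_mul (hassoc : ∀ x y z, mul (mul x y) z = mul x (mul y z))
    {c x : M} {μ : R} (hx : x ∈ maxGenEigenspace (mul c) μ) (y : M) :
    mul x y ∈ maxGenEigenspace (mul c) μ :=
  mapsTo_maxGenEigenspace_of_comm (g := mul.flip y)
    (LinearMap.ext fun z ↦ (hassoc c z y).symm) μ hx

theorem mul_mul_eq_zero_of_anticomm [IsAddTorsionFree M]
    (hassoc : ∀ x y z, mul (mul x y) z = mul x (mul y z)) {x y : M} (hyx : mul y x = -mul x y)
    (hyy : mul y y = -mul y y) : mul y (mul x y) = 0 := by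
  rw [← hassoc, hyx, map_neg, LinearMap.neg_apply, hassoc, self_eq_neg.1 hyy, map_zero, neg_zero]

end Frobenius

theorem stmt17_general (H : Type*) [AddCommGroup H] [Module ℂ H] [FiniteDimensional ℂ H]
    (Hev Hodd : Submodule ℂ H) (hcompl : IsCompl Hev Hodd)
    (mul : H →ₗ[ℂ] H →ₗ[ℂ] H)
    (hassoc : ∀ x y z : H, mul (mul x y) z = mul x (mul y z))
    (one : H) (hone_mul : ∀ x : H, mul one x = x)
    (hcomm_ev : ∀ x ∈ Hev, ∀ y : H, mul x y = mul y x)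
    (hanti : ∀ x ∈ Hodd, ∀ y ∈ Hodd, mul x y = -mul y x)
    (hee : ∀ x ∈ Hev, ∀ y ∈ Hev, mul x y ∈ Hev)
    (hoo : ∀ x ∈ Hodd, ∀ y ∈ Hodd, mul x y ∈ Hev)
    (heo : ∀ x ∈ Hev, ∀ y ∈ Hodd, mul x y ∈ Hodd)
    (B : H →ₗ[ℂ] H →ₗ[ℂ] ℂ) (hB : Function.Bijective fun v : H => B v)
    (hBeo : ∀ x ∈ Hev, ∀ y ∈ Hodd, B x y = 0)
    (hBoe : ∀ x ∈ Hodd, ∀ y ∈ Hev, B x y = 0)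
    (hFrob : ∀ x y z : H, B (mul x y) z = B x (mul y z))
    (c : H) (hc : c ∈ Hev) (lam : ℂ)
    (E : Submodule ℂ H)
    (hE : E = Module.End.maxGenEigenspace (mul c : Module.End ℂ H) lam) :
    (Hodd ⊓ E ≠ ⊥ → 2 ≤ Module.finrank ℂ ↥(Hev ⊓ E)) ∧
      (Module.finrank ℂ ↥(Hev ⊓ E) = 1 → Module.finrank ℂ ↥E = 1) := by
  have hself := isAdjointPair_mul_of_forall_mul_comm hFrob (hcomm_ev c hc)
  have hev : Hev ∈ invtSubmodule (mul c) := fun x hx ↦ hee c hc x hx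
  have hodd : Hodd ∈ invtSubmodule (mul c) := fun x hx ↦ heo c hc x hx
  have hodd_part : Hodd ⊓ E ≠ ⊥ → 2 ≤ finrank ℂ ↥(Hev ⊓ E) := by
    intro hne
    obtain ⟨α, ⟨hα, hαE⟩, hα0⟩ := Submodule.exists_mem_ne_zero_of_ne_bot hne
    obtain ⟨β, hβ, hαβ⟩ := exists_mem_apply_ne_zero_of_isCompl hB.injective hcompl hα0 (hBoe α hα)
    have hγ0 : mul α β ≠ 0 := fun h ↦ hαβ (by rw [← hone_mul α, hFrob, h, map_zero])
    have hγγ : B (mul α β) (mul α β) = 0 := by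
      have : IsAddTorsionFree H := .of_isTorsionFree ℂ H
      rw [hFrob, mul_mul_eq_zero_of_anticomm hassoc (hanti β hβ α hα) (hanti β hβ β hβ), map_zero]
    subst hE
    exact hself.two_le_finrank_inf_maxGenEigenspace hB.injective hcompl hev hodd
      ⟨hoo α hα β hβ, mul_mem_maxGenEigenspace_mul hassoc hαE β⟩ hγ0 hγγ
      (hBeo _ (hoo α hα β hβ))
  refine ⟨hodd_part, fun hrank ↦ ?_⟩
  have hbot : Hodd ⊓ E = ⊥ := by
    by_contra hne
    have := hodd_part hne
    omega
  have hsplit : E = Hev ⊓ E ⊔ Hodd ⊓ E := hE ▸ maxGenEigenspace_eq_inf_sup_inf hcompl hev hodd lam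
  rwa [hsplit, hbot, sup_bot_eq]

/-- Abstract form of the Hertling–Iritani argument: let `H = H^{ev} ⊕ H^{odd}` be the
(ℤ/2-graded) cohomology of a compact complex manifold, equipped with the
graded-commutative associative quantum product `*₀` (with unit `1 ∈ H^{ev}`), and a
non-degenerate Poincaré pairing `B` vanishing between even and odd parts, which is
Frobenius for the product. Let `E` be the generalized `λ`-eigenspace of quantum
multiplication by `c₁(X) ∈ H^{ev}`. If `H^{odd} ∩ E ≠ 0`, then
`dim(H^{ev} ∩ E) ≥ 2`. Consequently, if the eigenvalue has a one-dimensional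
generalized eigenspace in `H^{ev}` (Property O for the even part), then the
generalized eigenspace in the full cohomology is also one-dimensional. -/
theorem stmt17 (H : Type*) [AddCommGroup H] [Module ℂ H] [FiniteDimensional ℂ H]
    (Hev Hodd : Submodule ℂ H) (hcompl : IsCompl Hev Hodd)
    (mul : H →ₗ[ℂ] H →ₗ[ℂ] H)
    (hassoc : ∀ x y z : H, mul (mul x y) z = mul x (mul y z))
    (one : H) (hone_ev : one ∈ Hev) (hone_mul : ∀ x : H, mul one x = x)
    (hcomm_ev : ∀ x ∈ Hev, ∀ y : H, mul x y = mul y x)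
    (hanti : ∀ x ∈ Hodd, ∀ y ∈ Hodd, mul x y = -mul y x)
    (hee : ∀ x ∈ Hev, ∀ y ∈ Hev, mul x y ∈ Hev)
    (hoo : ∀ x ∈ Hodd, ∀ y ∈ Hodd, mul x y ∈ Hev)
    (heo : ∀ x ∈ Hev, ∀ y ∈ Hodd, mul x y ∈ Hodd)
    (hoe : ∀ x ∈ Hodd, ∀ y ∈ Hev, mul x y ∈ Hodd)
    (B : H →ₗ[ℂ] H →ₗ[ℂ] ℂ) (hB : Function.Bijective fun v : H => B v)
    (hBeo : ∀ x ∈ Hev, ∀ y ∈ Hodd, B x y = 0)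
    (hBoe : ∀ x ∈ Hodd, ∀ y ∈ Hev, B x y = 0)
    (hFrob : ∀ x y z : H, B (mul x y) z = B x (mul y z))
    (c : H) (hc : c ∈ Hev) (lam : ℂ)
    (E : Submodule ℂ H)
    (hE : E = Module.End.maxGenEigenspace (mul c : Module.End ℂ H) lam) :
    (Hodd ⊓ E ≠ ⊥ → 2 ≤ Module.finrank ℂ ↥(Hev ⊓ E)) ∧
      (Module.finrank ℂ ↥(Hev ⊓ E) = 1 → Module.finrank ℂ ↥E = 1) :=
  stmt17_general H Hev Hodd hcompl mul hassoc one hone_mul hcomm_ev hanti hee hoo heo B hB hBeo hBoe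
    hFrob c hc lam E hE
end
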